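/- arXiv:2109.06345 — 3 statements merged into one kernel-verified Lean document; each statement's English description precedes it below -/
import Mathlib

section
/- Let f be analytic in D₁ = D_{ρ,σ} with finite weighted Fourier norm ‖f‖₁. Then for every 0 < d < 1 and every 1 ≤ j ≤ n one has ‖∂f/∂q_j‖_{1−d} ≤ ‖f‖₁ / (e d σ), where e is Euler's number. -/
open scoped BigOperators ENNReal
open Real

namespace KAMStmt

variable {n : ℕ}

/-- ℓ¹ norm of an integer vector `k`. -/
def znorm (k : Fin n → ℤ) : ℕ := ∑ j, (k j).natAbs

/-- Complex polydisc of radius `ρ` around a center `c`. -/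
def polydisc (ρ : ℝ) (c : Fin n → ℂ) : Set (Fin n → ℂ) :=
  {z | ∀ j, ‖z j - c j‖ < ρ}

/-- Complex extension `G_ρ` of a real set `G ⊆ ℝⁿ`. -/
def Gext (G : Set (Fin n → ℝ)) (ρ : ℝ) : Set (Fin n → ℂ) :=
  ⋃ p ∈ G, polydisc ρ (fun j => (p j : ℂ))

/-- Complex extension `Tⁿ_σ` of the torus. -/
def torusExt (n : ℕ) (σ : ℝ) : Set (Fin n → ℂ) :=
  {q | ∀ j, |(q j).im| < σ}

/-- `k·q` with `k ∈ ℤⁿ`, `q ∈ ℂⁿ`. -/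
noncomputable def zdotC (k : Fin n → ℤ) (q : Fin n → ℂ) : ℂ := ∑ j, (k j : ℂ) * q j

/-- `k·ω` with `k ∈ ℤⁿ`, `ω ∈ ℝⁿ`. -/
def zdotR (k : Fin n → ℤ) (ω : Fin n → ℝ) : ℝ := ∑ j, (k j : ℝ) * ω j

/-- Diophantine condition `|k·ω| > γ |k|^{-τ}` for all `k ≠ 0`. -/
def Diophantine (ω : Fin n → ℝ) (γ τ : ℝ) : Prop :=
  ∀ k : Fin n → ℤ, k ≠ 0 → γ * (znorm k : ℝ) ^ (-τ) < |zdotR k ω|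

/-- Families of Fourier coefficients `f_k(p)` of a function `f(p,q) = Σ_k f_k(p) e^{i k·q}`. -/
abbrev Coeffs (n : ℕ) := (Fin n → ℤ) → (Fin n → ℂ) → ℂ

/-- sup of `‖g‖` over a set, in `ℝ≥0∞`. -/
noncomputable def supE (S : Set (Fin n → ℂ)) (g : (Fin n → ℂ) → ℂ) : ℝ≥0∞ :=
  ⨆ p ∈ S, (‖g p‖₊ : ℝ≥0∞)

/-- weighted Fourier norm `‖f‖_{ρ,σ} = Σ_k |f_k|_ρ e^{|k|σ}` (sup over `G_ρ`). -/
noncomputable def wnorm (G : Set (Fin n → ℝ)) (F : Coeffs n) (ρ σ : ℝ) : ℝ≥0∞ :=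
  ∑' k : Fin n → ℤ, supE (Gext G ρ) (F k) * ENNReal.ofReal (Real.exp ((znorm k : ℝ) * σ))

/-- partial derivative `∂g/∂p_j`. -/
noncomputable def pder (j : Fin n) (g : (Fin n → ℂ) → ℂ) : (Fin n → ℂ) → ℂ :=
  fun p => fderiv ℂ g p (Pi.single j 1)

/-- Fourier coefficients of the Poisson bracket
`{f,g} = Σ_j (∂f/∂p_j ∂g/∂q_j − ∂f/∂q_j ∂g/∂p_j)`. -/
noncomputable def pbC (F Gc : Coeffs n) : Coeffs n := fun k p =>
  ∑' k₁ : Fin n → ℤ, ∑ j,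
    (pder j (F k₁) p * (Complex.I * ((k j - k₁ j : ℤ) : ℂ)) * Gc (k - k₁) p
      - Complex.I * ((k₁ j : ℤ) : ℂ) * F k₁ p * pder j (Gc (k - k₁)) p)

/-- Lie derivative `L_X g = {g, X}` at the level of Fourier coefficients. -/
noncomputable def lieC (X g : Coeffs n) : Coeffs n := pbC g X

/-- iterated Lie derivative `L_X^s`. -/
noncomputable def lieIter (X : Coeffs n) (s : ℕ) (g : Coeffs n) : Coeffs n := (lieC X)^[s] g

/-- the class `P_l`: homogeneous of degree `l` in the actions `p`. -/
def InP (l : ℕ) (F : Coeffs n) : Prop :=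
  ∀ (k : Fin n → ℤ) (t : ℂ) (p : Fin n → ℂ), F k (t • p) = t ^ l * F k p

/-- standard symplectic form on `ℂⁿ × ℂⁿ`. -/
noncomputable def sympForm (u v : (Fin n → ℂ) × (Fin n → ℂ)) : ℂ :=
  ∑ j, (u.1 j * v.2 j - u.2 j * v.1 j)

/-- canonical (holomorphic symplectic) map on a domain `D`. -/
def IsCanonicalOn (D : Set ((Fin n → ℂ) × (Fin n → ℂ)))
    (C : (Fin n → ℂ) × (Fin n → ℂ) → (Fin n → ℂ) × (Fin n → ℂ)) : Prop :=
  DifferentiableOn ℂ C D ∧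
  ∀ z ∈ D, ∀ u v, sympForm (fderiv ℂ C z u) (fderiv ℂ C z v) = sympForm u v


theorem Gext_mono (G : Set (Fin n → ℝ)) {r s : ℝ} (hrs : r ≤ s) : Gext G r ⊆ Gext G s :=
  Set.biUnion_mono subset_rfl fun _ _ _ hz j => (hz j).trans_le hrs

theorem supE_mono {S T : Set (Fin n → ℂ)} (hST : S ⊆ T) (g : (Fin n → ℂ) → ℂ) :
    supE S g ≤ supE T g :=
  biSup_mono hST

theorem supE_const_mul (S : Set (Fin n → ℂ)) (c : ℂ) (g : (Fin n → ℂ) → ℂ) :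
    supE S (fun p => c * g p) = ‖c‖ₑ * supE S g := by
  simp only [supE, nnnorm_mul, ENNReal.coe_mul, ENNReal.mul_iSup, enorm]

theorem abs_le_znorm (k : Fin n → ℤ) (j : Fin n) : |(k j : ℝ)| ≤ znorm k := by
  rw [← Int.cast_abs, ← Nat.cast_natAbs, Nat.cast_le]
  exact Finset.single_le_sum (f := fun i => (k i).natAbs) (fun _ _ => Nat.zero_le _)
    (Finset.mem_univ j)

/-- Cauchy estimate for a single Fourier mode: the factor `a ≤ N` is absorbed by the loss
`e^{Nδ}` of the exponential weight, since `e · Nδ ≤ e^{Nδ}`. -/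
theorem mul_exp_le_of_add_le {a N σ' δ σ : ℝ} (ha : a ≤ N) (hN : 0 ≤ N) (hδ : 0 < δ)
    (hσ : σ' + δ ≤ σ) : a * exp (N * σ') ≤ 1 / (exp 1 * δ) * exp (N * σ) := by
  have hN_le : N ≤ 1 / (exp 1 * δ) * exp (N * δ) := by
    rw [one_div_mul_eq_div, le_div_iff₀ (by positivity)]
    calc N * (exp 1 * δ) = exp 1 * (N * δ) := by ring
      _ ≤ exp (N * δ) := exp_one_mul_le_exp
  calc a * exp (N * σ') ≤ 1 / (exp 1 * δ) * exp (N * δ) * exp (N * σ') := by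
        gcongr; exact ha.trans hN_le
    _ = 1 / (exp 1 * δ) * exp (N * (σ' + δ)) := by rw [mul_assoc, ← exp_add]; ring_nf
    _ ≤ 1 / (exp 1 * δ) * exp (N * σ) := by gcongr

theorem wnorm_mul_le {G : Set (Fin n → ℝ)} (F : Coeffs n) (c : (Fin n → ℤ) → ℂ)
    (hc : ∀ k, ‖c k‖ ≤ znorm k) {ρ' ρ σ' δ σ : ℝ} (hρ : ρ' ≤ ρ) (hδ : 0 < δ)
    (hσ : σ' + δ ≤ σ) :
    wnorm G (fun k p => c k * F k p) ρ' σ' ≤ ENNReal.ofReal (1 / (exp 1 * δ)) * wnorm G F ρ σ := by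
  rw [wnorm, wnorm, ← ENNReal.tsum_mul_left]
  refine ENNReal.tsum_le_tsum fun k => ?_
  have hweight : ‖c k‖ₑ * ENNReal.ofReal (exp (znorm k * σ'))
      ≤ ENNReal.ofReal (1 / (exp 1 * δ)) * ENNReal.ofReal (exp (znorm k * σ)) := by
    rw [← ofReal_norm, ← ENNReal.ofReal_mul (norm_nonneg _),
      ← ENNReal.ofReal_mul (by positivity)]
    exact ENNReal.ofReal_le_ofReal (mul_exp_le_of_add_le (hc k) (Nat.cast_nonneg _) hδ hσ)
  calc supE (Gext G ρ') (fun p => c k * F k p) * ENNReal.ofReal (exp (znorm k * σ'))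
      ≤ supE (Gext G ρ) (F k) * (‖c k‖ₑ * ENNReal.ofReal (exp (znorm k * σ'))) := by
        rw [supE_const_mul, mul_comm ‖c k‖ₑ, mul_assoc]
        gcongr
        exact supE_mono (Gext_mono G hρ) _
    _ ≤ supE (Gext G ρ) (F k) *
          (ENNReal.ofReal (1 / (exp 1 * δ)) * ENNReal.ofReal (exp (znorm k * σ))) := by
        gcongr
    _ = _ := by ring

theorem statement3_general {n : ℕ} (G : Set (Fin n → ℝ))
    (ρ σ : ℝ) (hρ : 0 < ρ) (hσ : 0 < σ)
    (F : Coeffs n)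
    (d : ℝ) (hd0 : 0 < d) (j : Fin n) :
    wnorm G (fun k p => Complex.I * (k j : ℂ) * F k p) ((1 - d) * ρ) ((1 - d) * σ)
      ≤ ENNReal.ofReal (1 / (Real.exp 1 * d * σ)) * wnorm G F ρ σ := by
  have hc : ∀ k : Fin n → ℤ, ‖Complex.I * (k j : ℂ)‖ ≤ znorm k := fun k => by
    simpa only [norm_mul, Complex.norm_I, one_mul, Complex.norm_intCast] using abs_le_znorm k j
  rw [mul_assoc (exp 1)]
  exact wnorm_mul_le F _ hc (by nlinarith) (by positivity) (by linarith)

/-- Lemma 4.1.i, second part: Cauchy estimate for `∂f/∂q_j`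
(whose Fourier coefficients are `i k_j F_k(p)`):
if `f(p,q) = Σ_k F_k(p) e^{i k·q}` is analytic in `D₁ = D_{ρ,σ}` with finite weighted
Fourier norm, then `‖∂f/∂q_j‖_{1−d} ≤ ‖f‖₁/(e d σ)` for `0 < d < 1`. -/
theorem statement3 {n : ℕ} (hn : 1 ≤ n) (G : Set (Fin n → ℝ)) (hG : IsOpen G)
    (ρ σ : ℝ) (hρ : 0 < ρ) (hσ : 0 < σ)
    (f : (Fin n → ℂ) → (Fin n → ℂ) → ℂ) (F : Coeffs n)
    (hanal : ∀ k, AnalyticOn ℂ (F k) (Gext G ρ))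
    (hrep : ∀ p ∈ Gext G ρ, ∀ q ∈ torusExt n σ,
      f p q = ∑' k : Fin n → ℤ, F k p * Complex.exp (Complex.I * zdotC k q))
    (hfin : wnorm G F ρ σ ≠ ⊤)
    (d : ℝ) (hd0 : 0 < d) (hd1 : d < 1) (j : Fin n) :
    wnorm G (fun k p => Complex.I * (k j : ℂ) * F k p) ((1 - d) * ρ) ((1 - d) * σ)
      ≤ ENNReal.ofReal (1 / (Real.exp 1 * d * σ)) * wnorm G F ρ σ :=
  statement3_general G ρ σ hρ hσ F d hd0 j

end KAMStmt
end

section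
/- Let f be analytic in D₁ = D_{ρ,σ} and g be analytic in D_{1−d'} for some 0 ≤ d' < 1, with finite weighted Fourier norms ‖f‖₁ and ‖g‖_{1−d'}. Then for every 0 < d < 1 − d' the Poisson bracket satisfies ‖{f,g}‖_{1−d'−d} ≤ (2 / (e d (d + d') ρ σ)) ‖f‖₁ ‖g‖_{1−d'}. -/
open scoped BigOperators ENNReal
open Real

namespace KAMStmt

variable {n : ℕ}

/-!
The Cauchy estimate on the polydiscs shrunk from radius `r₁` to `r` bounds every `∂/∂p_j` of a
coefficient by its sup divided by `r₁ - r`, while the factor `k_j` produced by `∂/∂q_j` is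
absorbed by shrinking the strip from `s₁` to `s`, since `x e^{-δx} ≤ 1/(eδ)`. The weight
`e^{|k|s}` is submultiplicative, so the convolution of coefficients in the bracket is bounded by
the product of the two weighted norms. In each of the two terms of the bracket one factor loses
`d + d'` and the other `d`, which gives the constant `2 / (e d (d + d') ρ σ)`.
-/

section Domains

variable {G : Set (Fin n → ℝ)}

lemma Gext_mono_s4 {r r' : ℝ} (h : r ≤ r') : Gext G r ⊆ Gext G r' :=
  Set.iUnion₂_mono fun _ _ _ hz j => (hz j).trans_le h

lemma isOpen_Gext (G : Set (Fin n → ℝ)) (r : ℝ) : IsOpen (Gext G r) := by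
  refine isOpen_biUnion fun c _ => ?_
  have : polydisc r (fun j => (c j : ℂ))
      = ⋂ j, (fun z : Fin n → ℂ => z j) ⁻¹' Metric.ball (c j : ℂ) r := by
    ext z
    simp [polydisc, dist_eq_norm]
  rw [this]
  exact isOpen_iInter_of_finite fun j => Metric.isOpen_ball.preimage (continuous_apply j)

lemma add_smul_single_mem_Gext {r r' : ℝ} {p : Fin n → ℂ} (hp : p ∈ Gext G r') (j : Fin n)
    {w : ℂ} (hw : ‖w‖ ≤ r - r') : p + w • Pi.single j 1 ∈ Gext G r := by
  obtain ⟨c, hc, hpc⟩ : ∃ c ∈ G, p ∈ polydisc r' (fun j => (c j : ℂ)) := by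
    simpa only [Gext, Set.mem_iUnion, exists_prop] using hp
  refine Set.mem_biUnion hc fun i => ?_
  simp only [Pi.add_apply, Pi.smul_apply, smul_eq_mul]
  rcases eq_or_ne i j with rfl | hij
  · have hi : ‖p i - c i‖ < r' := hpc i
    rw [Pi.single_eq_same, mul_one, add_sub_right_comm]
    linarith [norm_add_le (p i - c i) w]
  · rw [Pi.single_eq_of_ne hij, mul_zero, add_zero]
    exact (hpc i).trans_le (by linarith [norm_nonneg w])

end Domains

lemma enorm_le_supE {S : Set (Fin n → ℂ)} {g : (Fin n → ℂ) → ℂ} {p : Fin n → ℂ} (hp : p ∈ S) :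
    ‖g p‖ₑ ≤ supE S g :=
  le_biSup (fun p => (‖g p‖₊ : ℝ≥0∞)) hp

lemma supE_le {S : Set (Fin n → ℂ)} {g : (Fin n → ℂ) → ℂ} {C : ℝ≥0∞}
    (h : ∀ p ∈ S, ‖g p‖ₑ ≤ C) : supE S g ≤ C :=
  iSup₂_le h

/-- Cauchy estimate in the complex line through `p` in the direction `e_j`. -/
lemma norm_pder_le {S : Set (Fin n → ℂ)} (hS : IsOpen S) {h : (Fin n → ℂ) → ℂ}
    (hh : DifferentiableOn ℂ h S) {M t : ℝ} (ht : 0 < t) (hM : ∀ z ∈ S, ‖h z‖ ≤ M)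
    {p : Fin n → ℂ} {j : Fin n} (hp : ∀ w : ℂ, ‖w‖ ≤ t → p + w • Pi.single j 1 ∈ S) :
    ‖pder j h p‖ ≤ M / t := by
  set ψ : ℂ → (Fin n → ℂ) := fun w => p + w • Pi.single j 1
  have hψ : HasDerivAt ψ (Pi.single j 1) 0 := by
    have := ((hasDerivAt_id (0 : ℂ)).smul_const (Pi.single j (1 : ℂ))).const_add p
    rwa [one_smul] at this
  have hp0 : p ∈ S := by simpa using hp 0 (by simp [ht.le])
  have hderiv : HasDerivAt (h ∘ ψ) (pder j h p) 0 := by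
    have hh' : HasFDerivAt h (fderiv ℂ h p) (ψ 0) := by
      simpa [ψ] using (hh.differentiableAt (hS.mem_nhds hp0)).hasFDerivAt
    exact hh'.comp_hasDerivAt 0 hψ
  have hmaps : Set.MapsTo ψ (Metric.closedBall 0 t) S := fun w hw => hp w (by simpa using hw)
  have hcl : DiffContOnCl ℂ (h ∘ ψ) (Metric.ball 0 t) := by
    refine DifferentiableOn.diffContOnCl ?_
    rw [closure_ball (0 : ℂ) ht.ne']
    exact hh.comp ((differentiable_id.smul_const _).const_add p).differentiableOn hmaps
  rw [← hderiv.deriv]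
  exact Complex.norm_deriv_le_of_forall_mem_sphere_norm_le ht hcl fun w hw =>
    hM _ (hp w (mem_sphere_zero_iff_norm.mp hw).le)

lemma enorm_pder_le_supE {G : Set (Fin n → ℝ)} {h : (Fin n → ℂ) → ℂ} {r r' : ℝ} (hr : r' < r)
    (hh : DifferentiableOn ℂ h (Gext G r)) (j : Fin n) {p : Fin n → ℂ} (hp : p ∈ Gext G r') :
    ‖pder j h p‖ₑ ≤ ENNReal.ofReal (1 / (r - r')) * supE (Gext G r) h := by
  rcases eq_or_ne (supE (Gext G r) h) ⊤ with htop | hfin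
  · simp [htop, ENNReal.mul_top, hr]
  have hM : ∀ z ∈ Gext G r, ‖h z‖ ≤ (supE (Gext G r) h).toReal := fun z hz => by
    simpa using ENNReal.toReal_mono hfin (enorm_le_supE (g := h) hz)
  have hder := norm_pder_le (isOpen_Gext G r) hh (sub_pos.mpr hr) hM
    (fun w hw => add_smul_single_mem_Gext hp j hw)
  calc ‖pder j h p‖ₑ = ENNReal.ofReal ‖pder j h p‖ := (ofReal_norm _).symm
    _ ≤ ENNReal.ofReal (1 / (r - r') * (supE (Gext G r) h).toReal) :=
        ENNReal.ofReal_le_ofReal (by rwa [one_div_mul_eq_div])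
    _ = ENNReal.ofReal (1 / (r - r')) * supE (Gext G r) h := by
        rw [ENNReal.ofReal_mul (by simp [hr.le]), ENNReal.ofReal_toReal hfin]

lemma enorm_bracket_summand_le (a b : Fin n → ℤ) {u v : ℂ} {du dv : Fin n → ℂ}
    {A B Cu Cv : ℝ≥0∞} (hu : ‖u‖ₑ ≤ A) (hv : ‖v‖ₑ ≤ B) (hdu : ∀ j, ‖du j‖ₑ ≤ Cu * A)
    (hdv : ∀ j, ‖dv j‖ₑ ≤ Cv * B) :
    ‖∑ j, (du j * (Complex.I * (a j : ℂ)) * v - Complex.I * (b j : ℂ) * u * dv j)‖ₑ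
      ≤ (Cu * znorm a + Cv * znorm b) * (A * B) := by
  have hterm : ∀ j, ‖du j * (Complex.I * (a j : ℂ)) * v - Complex.I * (b j : ℂ) * u * dv j‖ₑ
      ≤ (Cu * (a j).natAbs + Cv * (b j).natAbs) * (A * B) := fun j =>
    calc _ ≤ ‖du j * (Complex.I * (a j : ℂ)) * v‖ₑ + ‖Complex.I * (b j : ℂ) * u * dv j‖ₑ :=
          enorm_sub_le
      _ = ‖du j‖ₑ * (a j).natAbs * ‖v‖ₑ + (b j).natAbs * ‖u‖ₑ * ‖dv j‖ₑ := by
          simp [enorm_eq_nnnorm, ← NNReal.natCast_natAbs]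
      _ ≤ Cu * A * (a j).natAbs * B + (b j).natAbs * A * (Cv * B) := by
          gcongr
          exacts [hdu j, hdv j]
      _ = (Cu * (a j).natAbs + Cv * (b j).natAbs) * (A * B) := by ring
  calc _ ≤ ∑ j, ‖du j * (Complex.I * (a j : ℂ)) * v - Complex.I * (b j : ℂ) * u * dv j‖ₑ :=
        enorm_sum_le _ _
    _ ≤ ∑ j, (Cu * (a j).natAbs + Cv * (b j).natAbs) * (A * B) :=
        Finset.sum_le_sum fun j _ => hterm j
    _ = (Cu * znorm a + Cv * znorm b) * (A * B) := by
        rw [← Finset.sum_mul, Finset.sum_add_distrib, ← Finset.mul_sum, ← Finset.mul_sum, znorm,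
          znorm, Nat.cast_sum, Nat.cast_sum]

lemma enorm_pbC_le {G : Set (Fin n → ℝ)} {F Gc : Coeffs n} {r r₁ r₂ : ℝ} (hr₁ : r < r₁)
    (hr₂ : r < r₂) (hF : ∀ k, DifferentiableOn ℂ (F k) (Gext G r₁))
    (hGc : ∀ k, DifferentiableOn ℂ (Gc k) (Gext G r₂)) (k : Fin n → ℤ) {p : Fin n → ℂ}
    (hp : p ∈ Gext G r) :
    ‖pbC F Gc k p‖ₑ ≤ ∑' k₁, (ENNReal.ofReal (1 / (r₁ - r)) * znorm (k - k₁)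
      + ENNReal.ofReal (1 / (r₂ - r)) * znorm k₁)
        * (supE (Gext G r₁) (F k₁) * supE (Gext G r₂) (Gc (k - k₁))) :=
  enorm_tsum_le_tsum_enorm.trans <| ENNReal.tsum_le_tsum fun k₁ =>
    enorm_bracket_summand_le (k - k₁) k₁ (enorm_le_supE (Gext_mono_s4 hr₁.le hp))
      (enorm_le_supE (Gext_mono_s4 hr₂.le hp)) (fun j => enorm_pder_le_supE hr₁ (hF k₁) j hp)
      (fun j => enorm_pder_le_supE hr₂ (hGc (k - k₁)) j hp)

lemma znorm_add_le (a b : Fin n → ℤ) : znorm (a + b) ≤ znorm a + znorm b := by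
  rw [znorm, znorm, znorm, ← Finset.sum_add_distrib]
  exact Finset.sum_le_sum fun j _ => Int.natAbs_add_le _ _

lemma mul_exp_mul_le (x : ℝ) {s s' : ℝ} (h : s < s') :
    x * Real.exp (x * s) ≤ Real.exp (x * s') / (Real.exp 1 * (s' - s)) := by
  rw [le_div_iff₀ (by have := sub_pos.mpr h; positivity)]
  calc x * Real.exp (x * s) * (Real.exp 1 * (s' - s))
      = Real.exp 1 * (x * (s' - s)) * Real.exp (x * s) := by ring
    _ ≤ Real.exp (x * (s' - s)) * Real.exp (x * s) := by
        gcongr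
        exact Real.exp_one_mul_le_exp
    _ = Real.exp (x * s') := by rw [← Real.exp_add]; ring_nf

noncomputable def weight (k : Fin n → ℤ) (s : ℝ) : ℝ≥0∞ :=
  ENNReal.ofReal (Real.exp (znorm k * s))

lemma weight_mono (k : Fin n → ℤ) {s s' : ℝ} (h : s ≤ s') : weight k s ≤ weight k s' := by
  unfold weight
  gcongr

lemma weight_le_mul_weight_sub (k k₁ : Fin n → ℤ) {s : ℝ} (hs : 0 ≤ s) :
    weight k s ≤ weight k₁ s * weight (k - k₁) s := by
  have h := znorm_add_le k₁ (k - k₁)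
  rw [add_sub_cancel] at h
  unfold weight
  rw [← ENNReal.ofReal_mul (Real.exp_pos _).le, ← Real.exp_add, ← add_mul]
  gcongr
  exact_mod_cast h

lemma znorm_mul_weight_le (k : Fin n → ℤ) {s s' : ℝ} (h : s < s') :
    (znorm k : ℝ≥0∞) * weight k s ≤ ENNReal.ofReal (1 / (Real.exp 1 * (s' - s))) * weight k s' := by
  unfold weight
  rw [← ENNReal.ofReal_natCast, ← ENNReal.ofReal_mul (Nat.cast_nonneg _),
    ← ENNReal.ofReal_mul (by have := sub_pos.mpr h; positivity), one_div_mul_eq_div]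
  exact ENNReal.ofReal_le_ofReal (mul_exp_mul_le _ h)

lemma tsum_conv_mul_weight_le (c : (Fin n → ℤ) → (Fin n → ℤ) → ℝ≥0∞) {s : ℝ} (hs : 0 ≤ s) :
    ∑' k, (∑' k₁, c k₁ (k - k₁)) * weight k s
      ≤ ∑' k₁, ∑' k₂, c k₁ k₂ * (weight k₁ s * weight k₂ s) :=
  calc ∑' k, (∑' k₁, c k₁ (k - k₁)) * weight k s
      = ∑' k, ∑' k₁, c k₁ (k - k₁) * weight k s :=
        tsum_congr fun _ => ENNReal.tsum_mul_right.symm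
    _ ≤ ∑' k, ∑' k₁, c k₁ (k - k₁) * (weight k₁ s * weight (k - k₁) s) :=
        ENNReal.tsum_le_tsum fun k => ENNReal.tsum_le_tsum fun k₁ =>
          mul_le_mul' le_rfl (weight_le_mul_weight_sub k k₁ hs)
    _ = ∑' k₁, ∑' k, c k₁ (k - k₁) * (weight k₁ s * weight (k - k₁) s) := ENNReal.tsum_comm
    _ = ∑' k₁, ∑' k₂, c k₁ k₂ * (weight k₁ s * weight k₂ s) :=
        tsum_congr fun k₁ => (Equiv.subRight k₁).tsum_eq fun k₂ =>
          c k₁ k₂ * (weight k₁ s * weight k₂ s)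

theorem wnorm_pbC_le {G : Set (Fin n → ℝ)} {F Gc : Coeffs n} {r r₁ r₂ s s₁ s₂ : ℝ}
    (hr₁ : r < r₁) (hr₂ : r < r₂) (hs : 0 ≤ s) (hs₁ : s < s₁) (hs₂ : s < s₂)
    (hF : ∀ k, DifferentiableOn ℂ (F k) (Gext G r₁))
    (hGc : ∀ k, DifferentiableOn ℂ (Gc k) (Gext G r₂)) :
    wnorm G (pbC F Gc) r s
      ≤ ENNReal.ofReal (1 / (r₁ - r) * (1 / (Real.exp 1 * (s₂ - s)))
          + 1 / (r₂ - r) * (1 / (Real.exp 1 * (s₁ - s))))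
        * (wnorm G F r₁ s₁ * wnorm G Gc r₂ s₂) := by
  set a := fun k => supE (Gext G r₁) (F k)
  set b := fun k => supE (Gext G r₂) (Gc k)
  set Cf := ENNReal.ofReal (1 / (r₁ - r))
  set Cg := ENNReal.ofReal (1 / (r₂ - r))
  set cf := ENNReal.ofReal (1 / (Real.exp 1 * (s₁ - s)))
  set cg := ENNReal.ofReal (1 / (Real.exp 1 * (s₂ - s)))
  have hconst : ENNReal.ofReal (1 / (r₁ - r) * (1 / (Real.exp 1 * (s₂ - s)))
      + 1 / (r₂ - r) * (1 / (Real.exp 1 * (s₁ - s)))) = Cf * cg + Cg * cf := by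
    have := sub_pos.mpr hr₁; have := sub_pos.mpr hr₂
    have := sub_pos.mpr hs₁; have := sub_pos.mpr hs₂
    rw [ENNReal.ofReal_add (by positivity) (by positivity), ENNReal.ofReal_mul (by positivity),
      ENNReal.ofReal_mul (by positivity)]
  -- `∂/∂p` falls on `F` in the first term of the bracket and on `Gc` in the second
  have hterm : ∀ k₁ k₂, (Cf * znorm k₂ + Cg * znorm k₁) * (a k₁ * b k₂)
      * (weight k₁ s * weight k₂ s)
      ≤ (Cf * cg + Cg * cf) * ((a k₁ * weight k₁ s₁) * (b k₂ * weight k₂ s₂)) := fun k₁ k₂ =>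
    calc _ = Cf * (a k₁ * weight k₁ s) * (b k₂ * (znorm k₂ * weight k₂ s))
          + Cg * (a k₁ * (znorm k₁ * weight k₁ s)) * (b k₂ * weight k₂ s) := by ring
      _ ≤ Cf * (a k₁ * weight k₁ s₁) * (b k₂ * (cg * weight k₂ s₂))
          + Cg * (a k₁ * (cf * weight k₁ s₁)) * (b k₂ * weight k₂ s₂) := by
        gcongr Cf * (_ * ?_) * (_ * ?_) + Cg * (_ * ?_) * (_ * ?_)
        exacts [weight_mono k₁ hs₁.le, znorm_mul_weight_le k₂ hs₂, znorm_mul_weight_le k₁ hs₁,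
          weight_mono k₂ hs₂.le]
      _ = _ := by ring
  calc wnorm G (pbC F Gc) r s = ∑' k, supE (Gext G r) (pbC F Gc k) * weight k s := rfl
    _ ≤ ∑' k, (∑' k₁, (Cf * znorm (k - k₁) + Cg * znorm k₁) * (a k₁ * b (k - k₁)))
          * weight k s :=
        ENNReal.tsum_le_tsum fun k =>
          mul_le_mul' (supE_le fun _ hp => enorm_pbC_le hr₁ hr₂ hF hGc k hp) le_rfl
    _ ≤ ∑' k₁, ∑' k₂, (Cf * znorm k₂ + Cg * znorm k₁) * (a k₁ * b k₂)
          * (weight k₁ s * weight k₂ s) :=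
        tsum_conv_mul_weight_le (fun k₁ k₂ => (Cf * znorm k₂ + Cg * znorm k₁) * (a k₁ * b k₂)) hs
    _ ≤ ∑' k₁, ∑' k₂, (Cf * cg + Cg * cf) * ((a k₁ * weight k₁ s₁) * (b k₂ * weight k₂ s₂)) :=
        ENNReal.tsum_le_tsum fun k₁ => ENNReal.tsum_le_tsum fun k₂ => hterm k₁ k₂
    _ = _ := by
        simp only [ENNReal.tsum_mul_left, ENNReal.tsum_mul_right, hconst]
        rfl

theorem statement4_general {n : ℕ} (G : Set (Fin n → ℝ))
    (ρ σ : ℝ) (hρ : 0 < ρ) (hσ : 0 < σ)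
    (d' d : ℝ) (hd'0 : 0 ≤ d') (hd0 : 0 < d) (hd : d < 1 - d')
    (F Gc : Coeffs n)
    (hFanal : ∀ k, AnalyticOn ℂ (F k) (Gext G ρ))
    (hGanal : ∀ k, AnalyticOn ℂ (Gc k) (Gext G ((1 - d') * ρ))) :
    wnorm G (pbC F Gc) ((1 - d' - d) * ρ) ((1 - d' - d) * σ)
      ≤ ENNReal.ofReal (2 / (Real.exp 1 * d * (d + d') * ρ * σ))
        * (wnorm G F ρ σ * wnorm G Gc ((1 - d') * ρ) ((1 - d') * σ)) := by
  have hdd' : 0 < d + d' := by linarith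
  have hbound := wnorm_pbC_le (r := (1 - d' - d) * ρ) (r₁ := ρ) (r₂ := (1 - d') * ρ)
    (s := (1 - d' - d) * σ) (s₁ := σ) (s₂ := (1 - d') * σ)
    (by nlinarith) (by nlinarith) (by nlinarith) (by nlinarith) (by nlinarith)
    (fun k => (hFanal k).differentiableOn) (fun k => (hGanal k).differentiableOn)
  rw [show ρ - (1 - d' - d) * ρ = (d + d') * ρ by ring,
    show (1 - d') * ρ - (1 - d' - d) * ρ = d * ρ by ring,
    show σ - (1 - d' - d) * σ = (d + d') * σ by ring,
    show (1 - d') * σ - (1 - d' - d) * σ = d * σ by ring] at hbound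
  convert hbound using 3
  field_simp
  ring

/-- Lemma 4.1.ii: estimate for the Poisson bracket:
if `f` is analytic in `D₁` and `g` in `D_{1−d'}` with finite weighted Fourier norms, then
`‖{f,g}‖_{1−d'−d} ≤ (2/(e d (d+d') ρ σ)) ‖f‖₁ ‖g‖_{1−d'}` for `0 < d < 1 − d'`.
The functions are given through their Fourier coefficient families `F`, `Gc`, and the
bracket through the corresponding coefficient family `pbC F Gc`. -/
theorem statement4 {n : ℕ} (hn : 1 ≤ n) (G : Set (Fin n → ℝ)) (hG : IsOpen G)
    (ρ σ : ℝ) (hρ : 0 < ρ) (hσ : 0 < σ)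
    (d' d : ℝ) (hd'0 : 0 ≤ d') (hd'1 : d' < 1) (hd0 : 0 < d) (hd : d < 1 - d')
    (f g : (Fin n → ℂ) → (Fin n → ℂ) → ℂ) (F Gc : Coeffs n)
    (hFanal : ∀ k, AnalyticOn ℂ (F k) (Gext G ρ))
    (hGanal : ∀ k, AnalyticOn ℂ (Gc k) (Gext G ((1 - d') * ρ)))
    (hFrep : ∀ p ∈ Gext G ρ, ∀ q ∈ torusExt n σ,
      f p q = ∑' k : Fin n → ℤ, F k p * Complex.exp (Complex.I * zdotC k q))
    (hGrep : ∀ p ∈ Gext G ((1 - d') * ρ), ∀ q ∈ torusExt n ((1 - d') * σ),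
      g p q = ∑' k : Fin n → ℤ, Gc k p * Complex.exp (Complex.I * zdotC k q))
    (hFfin : wnorm G F ρ σ ≠ ⊤)
    (hGfin : wnorm G Gc ((1 - d') * ρ) ((1 - d') * σ) ≠ ⊤) :
    wnorm G (pbC F Gc) ((1 - d' - d) * ρ) ((1 - d' - d) * σ)
      ≤ ENNReal.ofReal (2 / (Real.exp 1 * d * (d + d') * ρ * σ))
        * (wnorm G F ρ σ * wnorm G Gc ((1 - d') * ρ) ((1 - d') * σ)) :=
  statement4_general G ρ σ hρ hσ d' d hd'0 hd0 hd F Gc hFanal hGanal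

end KAMStmt
end

section
/- Let ω ∈ ℝⁿ be Diophantine with constants γ > 0, τ ≥ n − 1, let σ > 0, 0 < δ < 1, and let c : ℤⁿ∖{0} → ℂ satisfy M = Σ_{k≠0} |c_k| e^{|k|σ} < ∞, defining h₀(q) = Σ_{k≠0} c_k e^{i k·q}. Then the series χ₀(q) = Σ_{k≠0} (c_k/(i k·ω)) e^{i k·q} converges absolutely on Tⁿ_{(1−δ)σ}, its weighted Fourier norm satisfies Σ_{k≠0} (|c_k|/|k·ω|) e^{|k|(1−δ)σ} ≤ (1/γ) (τ/(e δ σ))^τ M, and χ₀ solves the homological equation Σ_{j=1}^n ω_j ∂χ₀/∂q_j = h₀ on Tⁿ_{(1−δ)σ}. -/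
open scoped BigOperators ENNReal
open Real

namespace KAMStmt

variable {n : ℕ}

/-! Dividing the `k`-th coefficient by `i k·ω` solves the homological equation term by term.
The Diophantine condition bounds `1/|k·ω|` by `γ⁻¹ |k|^τ`, and shrinking the strip by `δσ` turns
this polynomial loss into a constant, since `sup_{x ≥ 0} x^τ e^{-δσx} = (τ/(eδσ))^τ`. The same
estimate with one more power of `|k|` dominates the termwise derivatives uniformly on the strip,
so the series can be differentiated term by term. -/

open Complex

lemma one_le_znorm {k : Fin n → ℤ} (hk : k ≠ 0) : 1 ≤ znorm k := by
  obtain ⟨j, hj⟩ := Function.ne_iff.mp hk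
  calc 1 ≤ (k j).natAbs := Int.natAbs_pos.mpr hj
    _ ≤ znorm k :=
      Finset.single_le_sum (f := fun i => (k i).natAbs) (fun i _ => Nat.zero_le _)
        (Finset.mem_univ j)

lemma znorm_cast (k : Fin n → ℤ) : (znorm k : ℝ) = ∑ j, |(k j : ℝ)| := by
  simp [znorm, Nat.cast_natAbs]

lemma rpow_mul_exp_neg_mul_le {a b x : ℝ} (ha : 0 ≤ a) (hb : 0 < b) (hx : 0 ≤ x) :
    x ^ a * rexp (-(b * x)) ≤ (a / (rexp 1 * b)) ^ a := by
  rcases ha.eq_or_lt with rfl | ha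
  · simpa using Real.exp_le_one_iff.mpr (neg_nonpos.mpr (by positivity))
  set y := b * x / a
  -- `y ≤ e^{y-1}` raised to the power `a`, with `x = (a / b) y`
  have hy : y ≤ rexp (y - 1) := by linarith [Real.add_one_le_exp (y - 1)]
  have hx_eq : x = a / b * y := by simp only [y]; field_simp
  calc x ^ a * rexp (-(b * x)) = (a / b) ^ a * (y ^ a * rexp (-(b * x))) := by
        rw [hx_eq, Real.mul_rpow (by positivity) (by positivity)]; ring
    _ ≤ (a / b) ^ a * (rexp (y - 1) ^ a * rexp (-(b * x))) := by gcongr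
    _ = (a / b) ^ a * rexp (-1) ^ a := by
        rw [← Real.exp_mul, ← Real.exp_mul, ← Real.exp_add]
        congr 2
        simp only [y]; field_simp; ring
    _ = (a / (rexp 1 * b)) ^ a := by
        rw [← Real.mul_rpow (by positivity) (by positivity), Real.exp_neg]
        congr 1; field_simp

section Diophantine

variable {ω : Fin n → ℝ} {γ τ : ℝ}

lemma Diophantine.zdotR_ne_zero (h : Diophantine ω γ τ) (hγ : 0 < γ) {k : Fin n → ℤ}
    (hk : k ≠ 0) : zdotR k ω ≠ 0 := by
  have : (0 : ℝ) < znorm k := by exact_mod_cast one_le_znorm hk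
  exact abs_pos.mp (lt_trans (by positivity) (h k hk))

lemma Diophantine.inv_abs_zdotR_le (h : Diophantine ω γ τ) (hγ : 0 < γ) {k : Fin n → ℤ}
    (hk : k ≠ 0) : |zdotR k ω|⁻¹ ≤ γ⁻¹ * (znorm k : ℝ) ^ τ := by
  have hN : (0 : ℝ) < znorm k := by exact_mod_cast one_le_znorm hk
  have := inv_anti₀ (by positivity) (h k hk).le
  rwa [mul_inv, ← Real.rpow_neg hN.le, neg_neg] at this

-- Also true at `k = 0`, where the left side is the junk value `r / 0 = 0`.
lemma Diophantine.rpow_mul_div_mul_exp_le (h : Diophantine ω γ τ) (hγ : 0 < γ) (hτ : 0 ≤ τ)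
    {σ δ a r : ℝ} (hσ : 0 < σ) (hδ : 0 < δ) (ha : 0 ≤ a) (hr : 0 ≤ r) (k : Fin n → ℤ) :
    (znorm k : ℝ) ^ a * (r / |zdotR k ω|) * rexp (znorm k * ((1 - δ) * σ))
      ≤ γ⁻¹ * ((a + τ) / (rexp 1 * δ * σ)) ^ (a + τ) * (r * rexp (znorm k * σ)) := by
  rcases eq_or_ne k 0 with rfl | hk
  · simp only [zdotR, Pi.zero_apply, Int.cast_zero, zero_mul, Finset.sum_const_zero, abs_zero,
      div_zero, mul_zero, zero_mul]
    positivity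
  have hN : (0 : ℝ) < znorm k := by exact_mod_cast one_le_znorm hk
  set N : ℝ := (znorm k : ℝ)
  have hsplit : rexp (N * ((1 - δ) * σ)) = rexp (-(δ * σ * N)) * rexp (N * σ) := by
    rw [← Real.exp_add]; ring_nf
  calc N ^ a * (r / |zdotR k ω|) * rexp (N * ((1 - δ) * σ))
      = r * N ^ a * |zdotR k ω|⁻¹ * rexp (-(δ * σ * N)) * rexp (N * σ) := by
        rw [div_eq_mul_inv, hsplit]; ring
    _ ≤ r * N ^ a * (γ⁻¹ * N ^ τ) * rexp (-(δ * σ * N)) * rexp (N * σ) := by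
        gcongr; exact h.inv_abs_zdotR_le hγ hk
    _ = γ⁻¹ * (N ^ (a + τ) * rexp (-(δ * σ * N))) * (r * rexp (N * σ)) := by
        rw [Real.rpow_add hN]; ring
    _ ≤ γ⁻¹ * ((a + τ) / (rexp 1 * δ * σ)) ^ (a + τ) * (r * rexp (N * σ)) := by
        gcongr
        rw [mul_assoc (rexp 1)]
        exact rpow_mul_exp_neg_mul_le (by positivity) (by positivity) hN.le

end Diophantine

section Torus

lemma torusExt_eq_pi (s : ℝ) :
    torusExt n s = Set.univ.pi fun _ => Complex.im ⁻¹' Set.Ioo (-s) s := by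
  ext q; simp [torusExt, abs_lt]

lemma isOpen_torusExt (s : ℝ) : IsOpen (torusExt n s) := by
  rw [torusExt_eq_pi]
  exact isOpen_set_pi Set.finite_univ fun _ _ => isOpen_Ioo.preimage continuous_im

lemma convex_torusExt (s : ℝ) : Convex ℝ (torusExt n s) := by
  rw [torusExt_eq_pi]
  exact convex_pi fun _ _ => (convex_Ioo _ _).linear_preimage imLm

lemma norm_cexp_I_mul_zdotC_le {s : ℝ} (k : Fin n → ℤ) {q : Fin n → ℂ}
    (hq : q ∈ torusExt n s) : ‖cexp (I * zdotC k q)‖ ≤ rexp (znorm k * s) := by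
  have him : (I * zdotC k q).re = ∑ j, -((k j : ℝ) * (q j).im) := by
    simp [zdotC, Complex.mul_re, Complex.im_sum, Finset.sum_neg_distrib]
  rw [Complex.norm_exp, Real.exp_le_exp, him, znorm_cast, Finset.sum_mul]
  refine Finset.sum_le_sum fun j _ => ?_
  calc -((k j : ℝ) * (q j).im) ≤ |(k j : ℝ)| * |(q j).im| := by
        rw [← abs_mul]; exact neg_le_abs _
    _ ≤ |(k j : ℝ)| * s := by gcongr; exact (hq j).le

end Torus

noncomputable def zdotCLM (k : Fin n → ℤ) : (Fin n → ℂ) →L[ℂ] ℂ :=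
  ∑ j, (k j : ℂ) • ContinuousLinearMap.proj j

@[simp]
lemma zdotCLM_apply (k : Fin n → ℤ) (q : Fin n → ℂ) : zdotCLM k q = zdotC k q := by
  simp [zdotCLM, zdotC]

lemma norm_zdotCLM_le (k : Fin n → ℤ) : ‖zdotCLM k‖ ≤ znorm k := by
  refine ContinuousLinearMap.opNorm_le_bound _ (Nat.cast_nonneg _) fun q => ?_
  rw [zdotCLM_apply, zdotC, znorm_cast, Finset.sum_mul]
  refine (norm_sum_le _ _).trans (Finset.sum_le_sum fun j _ => ?_)
  rw [norm_mul, ← Complex.ofReal_intCast, Complex.norm_real, Real.norm_eq_abs]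
  gcongr
  exact norm_le_pi_norm q j

lemma zdotC_ofReal (k : Fin n → ℤ) (ω : Fin n → ℝ) :
    zdotC k (fun j => (ω j : ℂ)) = zdotR k ω := by
  simp [zdotC, zdotR]

lemma hasFDerivAt_fourierMode (b : ℂ) (k : Fin n → ℤ) (q : Fin n → ℂ) :
    HasFDerivAt (fun q' => b * cexp (I * zdotC k q'))
      ((I * (b * cexp (I * zdotC k q))) • zdotCLM k) q := by
  have hlin : HasFDerivAt (fun q' => I * zdotC k q') (I • zdotCLM k) q := by
    simpa using ((zdotCLM k).hasFDerivAt (x := q)).const_mul I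
  refine (hlin.cexp.const_mul b).congr_fderiv ?_
  rw [smul_smul, smul_smul]
  ring_nf

section FourierSeries

variable {b : (Fin n → ℤ) → ℂ} {s : ℝ} {q : Fin n → ℂ}

lemma summable_norm_fourierSeries (hb : Summable fun k => ‖b k‖ * rexp (znorm k * s))
    (hq : q ∈ torusExt n s) : Summable fun k => ‖b k * cexp (I * zdotC k q)‖ :=
  hb.of_nonneg_of_le (fun _ => norm_nonneg _) fun k => by
    rw [norm_mul]; gcongr; exact norm_cexp_I_mul_zdotC_le k hq

lemma norm_fderiv_fourierMode_le (k : Fin n → ℤ) (hq : q ∈ torusExt n s) :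
    ‖(I * (b k * cexp (I * zdotC k q))) • zdotCLM k‖
      ≤ (znorm k : ℝ) * ‖b k‖ * rexp (znorm k * s) := by
  rw [norm_smul, norm_mul, norm_I, one_mul, norm_mul, mul_comm, ← mul_assoc]
  gcongr
  · exact norm_zdotCLM_le k
  · exact norm_cexp_I_mul_zdotC_le k hq

lemma hasFDerivAt_fourierSeries (hb : Summable fun k => ‖b k‖ * rexp (znorm k * s))
    (hb' : Summable fun k => (znorm k : ℝ) * ‖b k‖ * rexp (znorm k * s))
    (hq : q ∈ torusExt n s) :
    HasFDerivAt (fun q' => ∑' k, b k * cexp (I * zdotC k q'))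
      (∑' k, (I * (b k * cexp (I * zdotC k q))) • zdotCLM k) q :=
  hasFDerivAt_tsum_of_isPreconnected hb' (isOpen_torusExt s)
    (convex_torusExt s).isPreconnected (fun k q _ => hasFDerivAt_fourierMode (b k) k q)
    (fun k _ hq => norm_fderiv_fourierMode_le k hq) hq
    (summable_norm_fourierSeries hb hq).of_norm hq

lemma fderiv_fourierSeries_apply (hb : Summable fun k => ‖b k‖ * rexp (znorm k * s))
    (hb' : Summable fun k => (znorm k : ℝ) * ‖b k‖ * rexp (znorm k * s))
    (hq : q ∈ torusExt n s) (v : Fin n → ℂ) :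
    fderiv ℂ (fun q' => ∑' k, b k * cexp (I * zdotC k q')) q v
      = ∑' k, I * (b k * cexp (I * zdotC k q)) * zdotC k v := by
  have hsum : Summable fun k => (I * (b k * cexp (I * zdotC k q))) • zdotCLM k :=
    (hb'.of_nonneg_of_le (fun _ => norm_nonneg _)
      fun k => norm_fderiv_fourierMode_le k hq).of_norm
  rw [(hasFDerivAt_fourierSeries hb hb' hq).fderiv, ← ContinuousLinearMap.apply_apply (𝕜 := ℂ) v,
    (ContinuousLinearMap.apply ℂ ℂ v).map_tsum hsum]
  simp

end FourierSeries

lemma sum_mul_apply_single {ι : Type*} [Fintype ι] [DecidableEq ι] {R : Type*} [CommSemiring R]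
    [TopologicalSpace R] (L : (ι → R) →L[R] R) (v : ι → R) :
    ∑ i, v i * L (Pi.single i 1) = L v := by
  conv_rhs => rw [pi_eq_sum_univ' v, map_sum]
  simp only [map_smul, smul_eq_mul]

lemma norm_div_I_mul_ofReal (z : ℂ) (x : ℝ) : ‖z / (I * x)‖ = ‖z‖ / |x| := by
  rw [norm_div, norm_mul, norm_I, one_mul, norm_real, Real.norm_eq_abs]

theorem statement7_general {n : ℕ} (hn : 1 ≤ n) (ω : Fin n → ℝ) (γ τ : ℝ)
    (hγ : 0 < γ) (hτ : (n : ℝ) - 1 ≤ τ) (hdio : Diophantine ω γ τ)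
    (σ δ : ℝ) (hσ : 0 < σ) (hδ0 : 0 < δ)
    (c : (Fin n → ℤ) → ℂ) (hc0 : c 0 = 0)
    (hM : Summable (fun k : Fin n → ℤ => ‖c k‖ * Real.exp ((znorm k : ℝ) * σ))) :
    (∀ q ∈ torusExt n ((1 - δ) * σ),
      Summable (fun k : Fin n → ℤ =>
        ‖c k / (Complex.I * (zdotR k ω : ℂ)) * Complex.exp (Complex.I * zdotC k q)‖)) ∧
    Summable (fun k : Fin n → ℤ =>
      ‖c k‖ / |zdotR k ω| * Real.exp ((znorm k : ℝ) * ((1 - δ) * σ))) ∧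
    (∑' k : Fin n → ℤ, ‖c k‖ / |zdotR k ω| * Real.exp ((znorm k : ℝ) * ((1 - δ) * σ)))
      ≤ (1 / γ) * (τ / (Real.exp 1 * δ * σ)) ^ τ
          * ∑' k : Fin n → ℤ, ‖c k‖ * Real.exp ((znorm k : ℝ) * σ) ∧
    ∀ q ∈ torusExt n ((1 - δ) * σ),
      (∑ j, (ω j : ℂ) *
          fderiv ℂ (fun q' => ∑' k : Fin n → ℤ,
            c k / (Complex.I * (zdotR k ω : ℂ)) * Complex.exp (Complex.I * zdotC k q'))
            q (Pi.single j 1))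
        = ∑' k : Fin n → ℤ, c k * Complex.exp (Complex.I * zdotC k q) := by
  have hτ0 : 0 ≤ τ := by linarith [show (1 : ℝ) ≤ n by exact_mod_cast hn]
  have hweight (a : ℝ) (ha : 0 ≤ a) (k : Fin n → ℤ) :=
    hdio.rpow_mul_div_mul_exp_le hγ hτ0 hσ hδ0 ha (norm_nonneg (c k)) k
  have hweight0 := hweight 0 le_rfl
  simp only [Real.rpow_zero, one_mul, zero_add, ← one_div] at hweight0
  have hχ : Summable fun k => ‖c k‖ / |zdotR k ω| * rexp (znorm k * ((1 - δ) * σ)) :=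
    (hM.mul_left _).of_nonneg_of_le (fun _ => by positivity) hweight0
  have hχ' : Summable fun k =>
      (znorm k : ℝ) * (‖c k‖ / |zdotR k ω|) * rexp (znorm k * ((1 - δ) * σ)) :=
    (hM.mul_left _).of_nonneg_of_le (fun _ => by positivity) (by simpa using hweight 1 zero_le_one)
  have hnorm (k : Fin n → ℤ) : ‖c k / (I * (zdotR k ω : ℂ))‖ = ‖c k‖ / |zdotR k ω| :=
    norm_div_I_mul_ofReal _ _
  have hb : Summable fun k =>
      ‖c k / (I * (zdotR k ω : ℂ))‖ * rexp (znorm k * ((1 - δ) * σ)) := by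
    simpa only [hnorm] using hχ
  have hb' : Summable fun k =>
      (znorm k : ℝ) * ‖c k / (I * (zdotR k ω : ℂ))‖ * rexp (znorm k * ((1 - δ) * σ)) := by
    simpa only [hnorm] using hχ'
  refine ⟨fun q hq => summable_norm_fourierSeries hb hq, hχ, ?_, fun q hq => ?_⟩
  · calc _ ≤ ∑' k, 1 / γ * (τ / (rexp 1 * δ * σ)) ^ τ * (‖c k‖ * rexp (znorm k * σ)) :=
          hχ.tsum_le_tsum hweight0 (hM.mul_left _)
      _ = _ := tsum_mul_left
  · rw [sum_mul_apply_single, fderiv_fourierSeries_apply hb hb' hq]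
    refine tsum_congr fun k => ?_
    rw [zdotC_ofReal]
    rcases eq_or_ne k 0 with rfl | hk
    · simp [hc0]
    · have : (zdotR k ω : ℂ) ≠ 0 := ofReal_ne_zero.mpr (hdio.zdotR_ne_zero hγ hk)
      field_simp

/-- solution of the homological equation. Given a Diophantine `ω`, a weightedly
summable coefficient family `c` (with `c 0 = 0`, i.e. `c` defined on `ℤⁿ∖{0}`), setting
`h₀(q) = Σ_{k≠0} c_k e^{i k·q}` and `χ₀(q) = Σ_{k≠0} (c_k/(i k·ω)) e^{i k·q}`, the series for
`χ₀` converges absolutely on `Tⁿ_{(1−δ)σ}`, its weighted Fourier norm satisfies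
`Σ_{k≠0} (|c_k|/|k·ω|) e^{|k|(1−δ)σ} ≤ (1/γ)(τ/(eδσ))^τ M`, and `χ₀` solves
`Σ_j ω_j ∂χ₀/∂q_j = h₀` on `Tⁿ_{(1−δ)σ}`. -/
theorem statement7 {n : ℕ} (hn : 1 ≤ n) (ω : Fin n → ℝ) (γ τ : ℝ)
    (hγ : 0 < γ) (hτ : (n : ℝ) - 1 ≤ τ) (hdio : Diophantine ω γ τ)
    (σ δ : ℝ) (hσ : 0 < σ) (hδ0 : 0 < δ) (hδ1 : δ < 1)
    (c : (Fin n → ℤ) → ℂ) (hc0 : c 0 = 0)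
    (hM : Summable (fun k : Fin n → ℤ => ‖c k‖ * Real.exp ((znorm k : ℝ) * σ))) :
    (∀ q ∈ torusExt n ((1 - δ) * σ),
      Summable (fun k : Fin n → ℤ =>
        ‖c k / (Complex.I * (zdotR k ω : ℂ)) * Complex.exp (Complex.I * zdotC k q)‖)) ∧
    Summable (fun k : Fin n → ℤ =>
      ‖c k‖ / |zdotR k ω| * Real.exp ((znorm k : ℝ) * ((1 - δ) * σ))) ∧
    (∑' k : Fin n → ℤ, ‖c k‖ / |zdotR k ω| * Real.exp ((znorm k : ℝ) * ((1 - δ) * σ)))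
      ≤ (1 / γ) * (τ / (Real.exp 1 * δ * σ)) ^ τ
          * ∑' k : Fin n → ℤ, ‖c k‖ * Real.exp ((znorm k : ℝ) * σ) ∧
    ∀ q ∈ torusExt n ((1 - δ) * σ),
      (∑ j, (ω j : ℂ) *
          fderiv ℂ (fun q' => ∑' k : Fin n → ℤ,
            c k / (Complex.I * (zdotR k ω : ℂ)) * Complex.exp (Complex.I * zdotC k q'))
            q (Pi.single j 1))
        = ∑' k : Fin n → ℤ, c k * Complex.exp (Complex.I * zdotC k q) :=
  statement7_general hn ω γ τ hγ hτ hdio σ δ hσ hδ0 c hc0 hM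

end KAMStmt
end
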